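/- arXiv:2008.00570 — 2 statements merged into one kernel-verified Lean document; each statement's English description precedes it below -/
import Mathlib

section
/- Let [A₁ → A₂ → ⋯ → A_N] be a complex in an abelian category, 1 ≤ n ≤ N, and A'ₙ ⊆ Aₙ a subobject such that the composite A'ₙ → Aₙ → Aₙ/im(Aₙ₋₁ → Aₙ) is an epimorphism. Define A'ₙ₋₁ := A'ₙ ×_{Aₙ} Aₙ₋₁. Then the natural morphism of complexes [A₁ → ⋯ → Aₙ₋₂ → A'ₙ₋₁ → A'ₙ → Aₙ₊₁ → ⋯ → A_N] → [A₁ → ⋯ → A_N] is a quasi-isomorphism (induces isomorphisms on all homology objects). It suffices to prove this for N = 3, n = 2: given a complex A₁ →^{f} A₂ →^{g} A₃ and A'₂ ⊆ A₂ with A'₂ surjecting onto A₂/im(f), the inclusion of the complex [f⁻¹(A'₂) → A'₂ → A₃] into [A₁ → A₂ → A₃] is a quasi-isomorphism. -/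
/-! The restricted complex agrees with the original one up to `im f`: since
`A₂' ⊔ im f = ⊤` and `im f ≤ ker g`, the modular law gives
`ker g = (im f ⊔ A₂') ⊓ ker g = im f ⊔ (A₂' ⊓ ker g)`, and `g` kills `im f`, so
`g(A₂) = g(A₂')`. Injectivity in the middle is `f(f⁻¹ A₂') = im f ⊓ A₂'`. -/

/-- Dévissage lemma on complexes: given a complex `A₁ →f A₂ →g A₃` of modules
(`g ∘ f = 0`) and a submodule `A₂' ⊆ A₂ with `A₂' + im f = A₂`, setting
`A₁' := f⁻¹(A₂')`, the inclusion of the restricted complex `[A₁' → A₂' → A₃]` into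
`[A₁ → A₂ → A₃]` is a quasi-isomorphism.  Expressed concretely on the three homology
spots:
* spot 1: `ker f ⊆ A₁'` (so the kernels agree);
* spot 2: injectivity `A₂' ⊓ im f ≤ f(A₁')` and surjectivity
  `ker g ≤ (ker g ⊓ A₂') ⊔ im f` of the induced map on middle homology;
* spot 3: `g(A₂') = g(A₂)`. -/
theorem stmt_9 {R : Type*} [Ring R] {A₁ A₂ A₃ : Type*}
    [AddCommGroup A₁] [AddCommGroup A₂] [AddCommGroup A₃]
    [Module R A₁] [Module R A₂] [Module R A₃]
    (f : A₁ →ₗ[R] A₂) (g : A₂ →ₗ[R] A₃) (hgf : g ∘ₗ f = 0)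
    (A₂' : Submodule R A₂) (hsum : A₂' ⊔ LinearMap.range f = ⊤) :
    LinearMap.ker f ≤ A₂'.comap f ∧
    A₂' ⊓ LinearMap.range f ≤ (A₂'.comap f).map f ∧
    LinearMap.ker g ≤ (LinearMap.ker g ⊓ A₂') ⊔ LinearMap.range f ∧
    A₂'.map g = (⊤ : Submodule R A₂).map g := by
  have hrange : LinearMap.range f ≤ LinearMap.ker g := LinearMap.range_le_ker_iff.mpr hgf
  refine ⟨Submodule.comap_mono bot_le, ?_, ?_, ?_⟩
  · rw [Submodule.map_comap_eq, inf_comm]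
  · refine le_of_eq ?_
    calc LinearMap.ker g = (LinearMap.range f ⊔ A₂') ⊓ LinearMap.ker g := by
          rw [sup_comm, hsum, top_inf_eq]
      _ = LinearMap.ker g ⊓ A₂' ⊔ LinearMap.range f := by
          rw [sup_inf_assoc_of_le _ hrange, sup_comm, inf_comm]
  · rw [← hsum, Submodule.map_sup, ← LinearMap.range_comp, hgf, LinearMap.range_zero, sup_bot_eq]
end

section
/- Let Γ be a group and let [M₂ →^{f₂} M₁ →^{f₁} M₀] be a complex of Γ-modules (f₁ ∘ f₂ = 0) quasi-isomorphic to M[2] via a map i : M[2] → C where M is a Γ-module placed in degree −2, i.e., i induces isomorphisms ker(f₂) ≅ M, and the complex is exact at M₁ and M₀. Let α = (a, b, c) be a 0-cocycle of Γ with values in the complex C (so a : Γ² → M₂, b : Γ → M₁, c ∈ M₀ satisfying the hypercocycle conditions). Choose c' ∈ M₁ with f₁(c') = c, and b' : Γ → M₂ with f₂(b'_γ) = b_γ − (∂c')_γ where (∂c')_γ = γ·c' − c'. Then a − ∂b' takes values in ker(f₂) ≅ M, is a 2-cocycle of Γ with values in M, and its class in H²(Γ, M) corresponds to [α] under the isomorphism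 H²(Γ, M) ≅ H⁰(Γ, C) induced by i. -/
/-!
As `f₂` is equivariant and `f₂ ∘ b' = b - ∂c'`, we get `f₂ ∘ (a - ∂b') = ∂b - ∂b + ∂∂c' = 0`,
so `a - ∂b'` lifts along `i` to some `β`; `β` is a cocycle because `i` is injective and commutes
with `∂`. For another choice `(c'', b'')`, exactness at `M₁` gives `c' - c'' = f₂ m`, hence
`b'' - b' - ∂m` lies in `ker f₂ = im i`, and its preimage `δ` satisfies `∂δ = β - β''`.
-/

namespace InhomogeneousCochains

variable {Γ A B C : Type*} [Group Γ] [AddCommGroup A] [AddCommGroup B] [AddCommGroup C]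
  [DistribMulAction Γ A] [DistribMulAction Γ B] [DistribMulAction Γ C]

def d₀₁ : A →+ (Γ → A) where
  toFun x g := g • x - x
  map_zero' := by ext; simp
  map_add' x y := by ext; simp only [Pi.add_apply, smul_add]; abel

def d₁₂ : (Γ → A) →+ (Γ → Γ → A) where
  toFun f g h := g • f h - f (g * h) + f g
  map_zero' := by ext; simp
  map_add' f f' := by ext; simp only [Pi.add_apply, smul_add]; abel

def d₂₃ : (Γ → Γ → A) →+ (Γ → Γ → Γ → A) where
  toFun f g h k := g • f h k - f (g * h) k + f g (h * k) - f g h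
  map_zero' := by ext; simp
  map_add' f f' := by ext; simp only [Pi.add_apply, smul_add]; abel

@[simp]
theorem d₀₁_apply (x : A) (g : Γ) : d₀₁ x g = g • x - x := rfl

@[simp]
theorem d₁₂_apply (f : Γ → A) (g h : Γ) : d₁₂ f g h = g • f h - f (g * h) + f g := rfl

@[simp]
theorem d₂₃_apply (f : Γ → Γ → A) (g h k : Γ) :
    d₂₃ f g h k = g • f h k - f (g * h) k + f g (h * k) - f g h := rfl

theorem d₁₂_comp_d₀₁ (x : A) : d₁₂ (d₀₁ x : Γ → A) = 0 := by
  ext g h; simp only [d₁₂_apply, d₀₁_apply, smul_sub, mul_smul, Pi.zero_apply]; abel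

theorem d₂₃_comp_d₁₂ (f : Γ → A) : d₂₃ (d₁₂ f) = 0 := by
  ext g h k; simp only [d₂₃_apply, d₁₂_apply, smul_sub, smul_add, mul_smul, mul_assoc,
    Pi.zero_apply]; abel

theorem map_d₀₁ (φ : A →+ B) (hφ : ∀ (g : Γ) (x : A), φ (g • x) = g • φ x)
    (x : A) (g : Γ) : φ (d₀₁ x g) = d₀₁ (φ x) g := by
  simp [hφ]

theorem map_d₁₂ (φ : A →+ B) (hφ : ∀ (g : Γ) (x : A), φ (g • x) = g • φ x)
    (f : Γ → A) (g h : Γ) : φ (d₁₂ f g h) = d₁₂ (fun x => φ (f x)) g h := by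
  simp [hφ]

theorem map_d₂₃ (φ : A →+ B) (hφ : ∀ (g : Γ) (x : A), φ (g • x) = g • φ x)
    (f : Γ → Γ → A) (g h k : Γ) :
    φ (d₂₃ f g h k) = d₂₃ (fun x y => φ (f x y)) g h k := by
  simp [hφ]

theorem map_sub_d₁₂_eq_zero (f : B →+ C) (hf : ∀ (g : Γ) (x : B), f (g • x) = g • f x)
    {a : Γ → Γ → B} {b : Γ → C} {b' : Γ → B} {c' : C}
    (hb : ∀ g h, f (a g h) = d₁₂ b g h) (hb' : ∀ g, f (b' g) = b g - d₀₁ c' g) (g h : Γ) :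
    f (a g h - d₁₂ b' g h) = 0 := by
  have hfb' : (fun x => f (b' x)) = b - d₀₁ c' := funext hb'
  rw [map_sub, hb, map_d₁₂ f hf, hfb', map_sub, d₁₂_comp_d₀₁, sub_zero, sub_self]

theorem d₂₃_eq_zero_of_map_eq (i : A →+ B) (hi : ∀ (g : Γ) (x : A), i (g • x) = g • i x)
    (hinj : Function.Injective i) {a : Γ → Γ → B} (ha : d₂₃ a = 0)
    {b' : Γ → B} {β : Γ → Γ → A} (hβ : ∀ g h, i (β g h) = a g h - d₁₂ b' g h) :
    d₂₃ β = 0 := by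
  have hiβ : (fun g h => i (β g h)) = a - d₁₂ b' := funext₂ hβ
  ext g h k
  apply hinj
  rw [map_d₂₃ i hi, hiβ, map_sub, ha, d₂₃_comp_d₁₂, sub_zero]
  simp only [Pi.zero_apply, map_zero]

theorem exists_eq_d₁₂_of_map_eq_d₁₂ (f : B →+ C) (hf : ∀ (g : Γ) (x : B), f (g • x) = g • f x)
    (i : A →+ B) (hi : ∀ (g : Γ) (x : A), i (g • x) = g • i x)
    (hinj : Function.Injective i) (hker : f.ker ≤ i.range)
    {e : Γ → B} {m : B} (he : ∀ g, f (e g) = d₀₁ (f m) g)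
    {β : Γ → Γ → A} (hβ : ∀ g h, i (β g h) = d₁₂ e g h) :
    ∃ δ : Γ → A, ∀ g h, β g h = d₁₂ δ g h := by
  have hlift : ∀ g, ∃ x, i x = e g - d₀₁ m g := fun g =>
    hker (by rw [AddMonoidHom.mem_ker, map_sub, he, map_d₀₁ f hf, sub_self])
  choose δ hδ using hlift
  have he' : e = (fun g => i (δ g)) + d₀₁ m := by
    ext g; rw [Pi.add_apply, hδ, sub_add_cancel]
  refine ⟨δ, fun g h => hinj ?_⟩
  rw [hβ, map_d₁₂ i hi, he', map_add, d₁₂_comp_d₀₁, add_zero]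

end InhomogeneousCochains

open InhomogeneousCochains in
theorem stmt_14_general {Γ : Type*} [Group Γ]
    {M M₂ M₁ M₀ : Type*}
    [AddCommGroup M] [AddCommGroup M₂] [AddCommGroup M₁] [AddCommGroup M₀]
    [DistribMulAction Γ M] [DistribMulAction Γ M₂] [DistribMulAction Γ M₁]
    [DistribMulAction Γ M₀]
    (f₂ : M₂ →+ M₁) (f₁ : M₁ →+ M₀) (i : M →+ M₂)
    (hf₂ : ∀ (γ : Γ) (m : M₂), f₂ (γ • m) = γ • f₂ m)
    (hi : ∀ (γ : Γ) (m : M), i (γ • m) = γ • i m)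
    (hiinj : Function.Injective i)
    (hiker : i.range = f₂.ker)
    (hexact₁ : f₂.range = f₁.ker)
    (a : Γ → Γ → M₂) (b : Γ → M₁) (c : M₀)
    (ha : ∀ γ₁ γ₂ γ₃ : Γ,
      γ₁ • a γ₂ γ₃ - a (γ₁ * γ₂) γ₃ + a γ₁ (γ₂ * γ₃) - a γ₁ γ₂ = 0)
    (hb : ∀ γ₁ γ₂ : Γ, f₂ (a γ₁ γ₂) = γ₁ • b γ₂ - b (γ₁ * γ₂) + b γ₁)
    (c' : M₁) (hc' : f₁ c' = c)
    (b' : Γ → M₂) (hb' : ∀ γ : Γ, f₂ (b' γ) = b γ - (γ • c' - c')) :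
    ∃ β : Γ → Γ → M,
      (∀ γ₁ γ₂ : Γ,
        i (β γ₁ γ₂) = a γ₁ γ₂ - (γ₁ • b' γ₂ - b' (γ₁ * γ₂) + b' γ₁)) ∧
      (∀ γ₁ γ₂ γ₃ : Γ,
        γ₁ • β γ₂ γ₃ - β (γ₁ * γ₂) γ₃ + β γ₁ (γ₂ * γ₃) - β γ₁ γ₂ = 0) ∧
      (∀ (c'' : M₁) (b'' : Γ → M₂) (β'' : Γ → Γ → M),
        f₁ c'' = c →
        (∀ γ : Γ, f₂ (b'' γ) = b γ - (γ • c'' - c'')) →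
        (∀ γ₁ γ₂ : Γ,
          i (β'' γ₁ γ₂) = a γ₁ γ₂ - (γ₁ • b'' γ₂ - b'' (γ₁ * γ₂) + b'' γ₁)) →
        ∃ δ : Γ → M, ∀ γ₁ γ₂ : Γ,
          β γ₁ γ₂ - β'' γ₁ γ₂ = γ₁ • δ γ₂ - δ (γ₁ * γ₂) + δ γ₁) := by
  choose β hβ using fun g h => hiker.ge (map_sub_d₁₂_eq_zero f₂ hf₂ hb hb' g h)
  have hcocycle : d₂₃ β = 0 := d₂₃_eq_zero_of_map_eq i hi hiinj (funext₃ ha) hβ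
  refine ⟨β, hβ, fun g h k => congrFun₃ hcocycle g h k, ?_⟩
  intro c'' b'' β'' hc'' hb'' hβ''
  obtain ⟨m, hm⟩ : c' - c'' ∈ f₂.range := by
    rw [hexact₁, AddMonoidHom.mem_ker, map_sub, hc', hc'', sub_self]
  refine exists_eq_d₁₂_of_map_eq_d₁₂ f₂ hf₂ i hi hiinj hiker.ge (e := b'' - b') (m := m)
    (fun g => ?_) (fun g h => ?_)
  · simp only [Pi.sub_apply, map_sub, hb', hb'', hm, d₀₁_apply, smul_sub]
    abel
  · simp only [map_sub, hβ, hβ'', d₁₂_apply, Pi.sub_apply, smul_sub]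
    abel

/-- Computing the class of a hyper-0-cocycle through a quasi-isomorphism
`M[2] → C = [M₂ → M₁ → M₀]`.  Given a `0`-cocycle `(a, b, c)` of `Γ` with values in
`C`, a lift `c'` of `c` and `b'` with `f₂(b'_γ) = b_γ − ∂c'`, the difference
`a − ∂b'` takes values in `ker f₂ ≅ M`, is a `2`-cocycle of `Γ` with values in `M`,
and its cohomology class is independent of the choices made (two choices differ by a
coboundary), representing the class of `(a,b,c)`. -/
theorem stmt_14 {Γ : Type*} [Group Γ]
    {M M₂ M₁ M₀ : Type*}
    [AddCommGroup M] [AddCommGroup M₂] [AddCommGroup M₁] [AddCommGroup M₀]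
    [DistribMulAction Γ M] [DistribMulAction Γ M₂] [DistribMulAction Γ M₁]
    [DistribMulAction Γ M₀]
    (f₂ : M₂ →+ M₁) (f₁ : M₁ →+ M₀) (i : M →+ M₂)
    (hf₂ : ∀ (γ : Γ) (m : M₂), f₂ (γ • m) = γ • f₂ m)
    (hf₁ : ∀ (γ : Γ) (m : M₁), f₁ (γ • m) = γ • f₁ m)
    (hi : ∀ (γ : Γ) (m : M), i (γ • m) = γ • i m)
    (hcomp : ∀ m : M₂, f₁ (f₂ m) = 0)
    (hiinj : Function.Injective i)
    (hiker : i.range = f₂.ker)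
    (hexact₁ : f₂.range = f₁.ker)
    (hf₁surj : Function.Surjective f₁)
    (a : Γ → Γ → M₂) (b : Γ → M₁) (c : M₀)
    (ha : ∀ γ₁ γ₂ γ₃ : Γ,
      γ₁ • a γ₂ γ₃ - a (γ₁ * γ₂) γ₃ + a γ₁ (γ₂ * γ₃) - a γ₁ γ₂ = 0)
    (hb : ∀ γ₁ γ₂ : Γ, f₂ (a γ₁ γ₂) = γ₁ • b γ₂ - b (γ₁ * γ₂) + b γ₁)
    (hc : ∀ γ : Γ, f₁ (b γ) = γ • c - c)
    (c' : M₁) (hc' : f₁ c' = c)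
    (b' : Γ → M₂) (hb' : ∀ γ : Γ, f₂ (b' γ) = b γ - (γ • c' - c')) :
    ∃ β : Γ → Γ → M,
      (∀ γ₁ γ₂ : Γ,
        i (β γ₁ γ₂) = a γ₁ γ₂ - (γ₁ • b' γ₂ - b' (γ₁ * γ₂) + b' γ₁)) ∧
      (∀ γ₁ γ₂ γ₃ : Γ,
        γ₁ • β γ₂ γ₃ - β (γ₁ * γ₂) γ₃ + β γ₁ (γ₂ * γ₃) - β γ₁ γ₂ = 0) ∧
      (∀ (c'' : M₁) (b'' : Γ → M₂) (β'' : Γ → Γ → M),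
        f₁ c'' = c →
        (∀ γ : Γ, f₂ (b'' γ) = b γ - (γ • c'' - c'')) →
        (∀ γ₁ γ₂ : Γ,
          i (β'' γ₁ γ₂) = a γ₁ γ₂ - (γ₁ • b'' γ₂ - b'' (γ₁ * γ₂) + b'' γ₁)) →
        ∃ δ : Γ → M, ∀ γ₁ γ₂ : Γ,
          β γ₁ γ₂ - β'' γ₁ γ₂ = γ₁ • δ γ₂ - δ (γ₁ * γ₂) + δ γ₁) :=
  stmt_14_general f₂ f₁ i hf₂ hi hiinj hiker hexact₁ a b c ha hb c' hc' b' hb'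
end
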